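/- arXiv:1110.5656 — 5 statements merged into one kernel-verified Lean document; each statement's English description precedes it below -/
import Mathlib

section
/- For all real x with e^{-n} < x ≤ 1 and (log x)^2 ≤ n/2, there exists an absolute constant C such that |(1/x)·(1 + (log x)/n)^n − 1| ≤ C·(log x)^2/n. -/
/-! With `t = log x` and `v = 1 + t/n`, the quantity is `exp (n log v - t)`. The exponent is
nonpositive because `log v ≤ v - 1`, and `1 - 1/v ≤ log v` bounds its size by `n (v-1)²/v`,
which is at most `4 t²/n` since `t² ≤ n/2` forces `v ≥ 1/4`. Finally `|exp d - 1| ≤ -d` for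
`d ≤ 0`. -/

open Real

lemma Real.sub_one_sub_log_le_sq_div {v : ℝ} (hv : 0 < v) : v - 1 - log v ≤ (v - 1) ^ 2 / v := by
  have h := one_sub_inv_le_log_of_pos hv
  have hsplit : (v - 1) ^ 2 / v = v - 1 - (1 - v⁻¹) := by field_simp
  linarith

lemma Real.sub_one_sub_log_le_four_mul_sq {v : ℝ} (hv : 1 / 4 ≤ v) :
    v - 1 - log v ≤ 4 * (v - 1) ^ 2 := by
  have hv0 : 0 < v := by linarith
  calc v - 1 - log v ≤ (v - 1) ^ 2 / v := sub_one_sub_log_le_sq_div hv0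
    _ ≤ 4 * (v - 1) ^ 2 := by
      rw [div_le_iff₀ hv0]; nlinarith [sq_nonneg (v - 1)]

lemma one_div_four_le_one_add_div {n t : ℝ} (hn : 0 < n) (ht : -(3 * n / 4) ≤ t) :
    1 / 4 ≤ 1 + t / n := by
  have : -(3 / 4) ≤ t / n := by rw [le_div_iff₀ hn]; linarith
  linarith

lemma Real.sub_mul_log_one_add_div_le {n t : ℝ} (hn : 0 < n) (ht : -(3 * n / 4) ≤ t) :
    t - n * log (1 + t / n) ≤ 4 * t ^ 2 / n := by
  have hv := one_div_four_le_one_add_div hn ht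
  have hscale : t = n * ((1 + t / n) - 1) := by field_simp; ring
  have key := mul_le_mul_of_nonneg_left (sub_one_sub_log_le_four_mul_sq hv) hn.le
  calc t - n * log (1 + t / n) = n * ((1 + t / n) - 1 - log (1 + t / n)) := by
        nth_rewrite 1 [hscale]; ring
    _ ≤ n * (4 * ((1 + t / n) - 1) ^ 2) := key
    _ = 4 * t ^ 2 / n := by field_simp; ring

lemma Real.mul_log_one_add_div_le {n t : ℝ} (hn : 0 < n) (hv : 0 < 1 + t / n) :
    n * log (1 + t / n) ≤ t := by
  have h := mul_le_mul_of_nonneg_left (log_le_sub_one_of_pos hv) hn.le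
  have hscale : n * (1 + t / n - 1) = t := by field_simp; ring
  linarith

lemma Real.abs_exp_sub_one_le_neg {d : ℝ} (hd : d ≤ 0) : |exp d - 1| ≤ -d := by
  rw [abs_of_nonpos (by simpa using exp_le_exp.mpr hd)]
  linarith [add_one_le_exp d]

lemma Real.one_div_mul_one_add_log_div_rpow_eq_exp {x n : ℝ} (hx : 0 < x) (hv : 0 < 1 + log x / n) :
    1 / x * (1 + log x / n) ^ n = exp (n * log (1 + log x / n) - log x) := by
  rw [rpow_def_of_pos hv, sub_eq_neg_add, exp_add, exp_neg, exp_log hx, one_div, mul_comm n]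

lemma neg_le_of_sq_le_half {n t : ℝ} (hn : 1 ≤ n) (ht : t ^ 2 ≤ n / 2) : -(3 * n / 4) ≤ t := by
  nlinarith

theorem stmt2 :
    ∃ C : ℝ, 0 < C ∧ ∀ n x : ℝ, 1 ≤ n → Real.exp (-n) < x → x ≤ 1 →
      (Real.log x) ^ 2 ≤ n / 2 →
      |(1 / x) * (1 + Real.log x / n) ^ n - 1| ≤ C * (Real.log x) ^ 2 / n := by
  refine ⟨4, by norm_num, fun n x hn hxlow _ hsq => ?_⟩
  have hn0 : 0 < n := by linarith
  have hx0 : 0 < x := (exp_pos _).trans hxlow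
  have hlow := neg_le_of_sq_le_half hn hsq
  have hv : 0 < 1 + log x / n := by linarith [one_div_four_le_one_add_div hn0 hlow]
  rw [one_div_mul_one_add_log_div_rpow_eq_exp hx0 hv]
  calc |exp (n * log (1 + log x / n) - log x) - 1|
      ≤ -(n * log (1 + log x / n) - log x) :=
        abs_exp_sub_one_le_neg (sub_nonpos.mpr (mul_log_one_add_div_le hn0 hv))
    _ ≤ 4 * log x ^ 2 / n := by linarith [sub_mul_log_one_add_div_le hn0 hlow]
end

section
/- Let h : [0, ∞) → [0, ∞) be a nonnegative concave function, differentiable on (0,∞), and let A(ℓ) = ∫₀^ℓ h(ℓ') dℓ'. Then for every ℓ > 0 with A(ℓ) > 0, one has h(ℓ)² − 2·h'(ℓ)·A(ℓ) ≥ 0. -/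
theorem stmt3 (h h' : ℝ → ℝ)
    (hnn : ∀ x, 0 ≤ x → 0 ≤ h x)
    (hconc : ConcaveOn ℝ (Set.Ici 0) h)
    (hderiv : ∀ x, 0 < x → HasDerivAt h (h' x) x)
    (ℓ : ℝ) (hℓ : 0 < ℓ) (hA : 0 < ∫ t in (0:ℝ)..ℓ, h t) :
    0 ≤ (h ℓ) ^ 2 - 2 * h' ℓ * ∫ t in (0:ℝ)..ℓ, h t := by
  rcases le_or_gt (h' ℓ) 0 with hd | hd
  · nlinarith [sq_nonneg (h ℓ)]
  · -- tangent line bound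
    have tangent : ∀ t ∈ Set.Icc (0:ℝ) ℓ, h t ≤ h ℓ + h' ℓ * (t - ℓ) := by
      intro t ht
      rcases eq_or_lt_of_le ht.2 with rfl | htl
      · simp
      · have hs := hconc.le_slope_of_hasDerivAt ht.1 (le_of_lt hℓ) htl (hderiv ℓ hℓ)
        rw [slope_def_field] at hs
        have hlt : 0 < ℓ - t := by linarith
        rw [le_div_iff₀ hlt] at hs; nlinarith
    have hint : IntervalIntegrable h MeasureTheory.volume 0 ℓ := by
      by_contra hc
      rw [intervalIntegral.integral_undef hc] at hA
      exact lt_irrefl 0 hA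
    have hint2 : IntervalIntegrable (fun t => h ℓ + h' ℓ * (t - ℓ)) MeasureTheory.volume 0 ℓ :=
      (Continuous.intervalIntegrable (by continuity) 0 ℓ)
    have hle : (∫ t in (0:ℝ)..ℓ, h t) ≤ ∫ t in (0:ℝ)..ℓ, (h ℓ + h' ℓ * (t - ℓ)) :=
      intervalIntegral.integral_mono_on (le_of_lt hℓ) hint hint2 tangent
    have hcalc : (∫ t in (0:ℝ)..ℓ, (h ℓ + h' ℓ * (t - ℓ))) = ℓ * h ℓ - h' ℓ * ℓ ^ 2 / 2 := by
      have : (∫ t in (0:ℝ)..ℓ, (h ℓ + h' ℓ * (t - ℓ)))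
          = (∫ t in (0:ℝ)..ℓ, h ℓ) + ∫ t in (0:ℝ)..ℓ, h' ℓ * (t - ℓ) := by
        rw [intervalIntegral.integral_add (intervalIntegrable_const)
          (Continuous.intervalIntegrable (by continuity) 0 ℓ)]
      rw [this, intervalIntegral.integral_const, intervalIntegral.integral_const_mul]
      have : (∫ t in (0:ℝ)..ℓ, (t - ℓ)) = (∫ t in (0:ℝ)..ℓ, t) - ∫ t in (0:ℝ)..ℓ, (ℓ:ℝ) := by
        rw [intervalIntegral.integral_sub (Continuous.intervalIntegrable (by continuity) 0 ℓ)
          intervalIntegrable_const]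
      rw [this, integral_id, intervalIntegral.integral_const]
      simp only [smul_eq_mul]
      ring
    rw [hcalc] at hle
    nlinarith [sq_nonneg (h ℓ - h' ℓ * ℓ)]
end

section
/- Let h : [0, ∞) → [0, ∞) be a nonnegative concave function and A(ℓ) = ∫₀^ℓ h(ℓ') dℓ'. Then the function ℓ ↦ h(ℓ)/√(A(ℓ)) is monotone nonincreasing on the set {ℓ > 0 : A(ℓ) > 0}. -/
/-!
It suffices to show `h(ℓ₂)² A(ℓ₁) ≤ h(ℓ₁)² A(ℓ₂)`. If `h ℓ₂ ≤ h ℓ₁` this holds because `A` is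
nondecreasing. Otherwise, by concavity the chord line `L` of `h` over `[ℓ₁, ℓ₂]` lies above `h` on
`[0, ℓ₁]` and below it on `[ℓ₁, ℓ₂]`, which reduces the inequality to the same one for `L`. For an
affine `L` it follows from the identity
`L(x)² ∫₀^y L - L(y)² ∫₀^x L = (y - x) (L(x) + L(y)) L(0)² / 2`.
-/

open MeasureTheory intervalIntegral Set

section Chord

variable {𝕜 : Type*} [Field 𝕜] [LinearOrder 𝕜] [IsStrictOrderedRing 𝕜] {s : Set 𝕜} {f : 𝕜 → 𝕜}
  {x y t : 𝕜}

theorem ConcaveOn.le_add_slope_mul_of_le (hf : ConcaveOn 𝕜 s f) (ht : t ∈ s) (hx : x ∈ s)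
    (hy : y ∈ s) (htx : t ≤ x) (hxy : x < y) : f t ≤ f x + slope f x y * (t - x) := by
  rcases htx.eq_or_lt with rfl | htx
  · simp
  have hslope : slope f x y ≤ slope f x t :=
    hf.slope_anti hx ⟨ht, htx.ne⟩ ⟨hy, hxy.ne'⟩ (htx.trans hxy).le
  rw [slope_def_field f x t, le_div_iff_of_neg (sub_neg.2 htx)] at hslope
  linarith

theorem ConcaveOn.add_slope_mul_le_of_mem_Icc (hf : ConcaveOn 𝕜 s f) (hx : x ∈ s) (hy : y ∈ s)
    (ht : t ∈ Icc x y) : f x + slope f x y * (t - x) ≤ f t := by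
  rcases ht.1.eq_or_lt with rfl | hxt
  · simp
  have hts : t ∈ s := hf.1.ordConnected.out hx hy ht
  have hslope : slope f x y ≤ slope f x t :=
    hf.slope_anti hx ⟨hts, hxt.ne'⟩ ⟨hy, (hxt.trans_le ht.2).ne'⟩ ht.2
  rw [slope_def_field f x t, le_div_iff₀ (sub_pos.2 hxt)] at hslope
  linarith

end Chord

theorem integral_const_add_mul_id (c m x y : ℝ) :
    ∫ t in x..y, (c + m * t) = c * (y - x) + m * (y ^ 2 - x ^ 2) / 2 := by
  rw [intervalIntegral.integral_add intervalIntegrable_const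
    ((continuous_const_mul m).intervalIntegrable _ _), intervalIntegral.integral_const_mul,
    integral_id, intervalIntegral.integral_const, smul_eq_mul]
  ring

theorem sq_mul_integral_affine_le {c m x y : ℝ} (hxy : x ≤ y)
    (hL : 0 ≤ (c + m * x) + (c + m * y)) :
    (c + m * y) ^ 2 * ∫ t in (0:ℝ)..x, (c + m * t) ≤
      (c + m * x) ^ 2 * ∫ t in (0:ℝ)..y, (c + m * t) := by
  rw [integral_const_add_mul_id, integral_const_add_mul_id]
  have hdefect : (c + m * x) ^ 2 * (c * (y - 0) + m * (y ^ 2 - 0 ^ 2) / 2)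
      - (c + m * y) ^ 2 * (c * (x - 0) + m * (x ^ 2 - 0 ^ 2) / 2)
      = (y - x) * ((c + m * x) + (c + m * y)) * c ^ 2 / 2 := by ring
  have hdefect_nonneg : 0 ≤ (y - x) * ((c + m * x) + (c + m * y)) * c ^ 2 / 2 :=
    div_nonneg (mul_nonneg (mul_nonneg (sub_nonneg.2 hxy) hL) (sq_nonneg c)) zero_le_two
  linarith

theorem div_sqrt_le_div_sqrt_of_sq_mul_le {a b A B : ℝ} (ha : 0 ≤ a) (hA : 0 < A) (hB : 0 < B)
    (h : b ^ 2 * A ≤ a ^ 2 * B) : b / √B ≤ a / √A := by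
  rw [div_le_div_iff₀ (Real.sqrt_pos.2 hB) (Real.sqrt_pos.2 hA)]
  calc b * √A ≤ |b| * √A := mul_le_mul_of_nonneg_right (le_abs_self b) (Real.sqrt_nonneg A)
    _ = √(b ^ 2 * A) := by rw [Real.sqrt_mul (sq_nonneg b), Real.sqrt_sq_eq_abs]
    _ ≤ √(a ^ 2 * B) := Real.sqrt_le_sqrt h
    _ = a * √B := by rw [Real.sqrt_mul (sq_nonneg a), Real.sqrt_sq ha]

theorem ConcaveOn.sq_mul_integral_le_of_lt {h : ℝ → ℝ} {ℓ₁ ℓ₂ : ℝ}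
    (hconc : ConcaveOn ℝ (Icc 0 ℓ₂) h) (h₁ : 0 ≤ ℓ₁) (hnn : 0 ≤ h ℓ₁) (hlt : h ℓ₁ < h ℓ₂)
    (h₁₂ : ℓ₁ ≤ ℓ₂) (hi₁ : IntervalIntegrable h volume 0 ℓ₁)
    (hi₁₂ : IntervalIntegrable h volume ℓ₁ ℓ₂) :
    h ℓ₂ ^ 2 * ∫ t in (0:ℝ)..ℓ₁, h t ≤ h ℓ₁ ^ 2 * ∫ t in (0:ℝ)..ℓ₂, h t := by
  have h₁₂' : ℓ₁ < ℓ₂ := h₁₂.lt_of_ne (by rintro rfl; exact hlt.false)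
  have hmem₁ : ℓ₁ ∈ Icc 0 ℓ₂ := ⟨h₁, h₁₂⟩
  have hmem₂ : ℓ₂ ∈ Icc 0 ℓ₂ := ⟨h₁.trans h₁₂, le_rfl⟩
  set m := slope h ℓ₁ ℓ₂
  set c := h ℓ₁ - m * ℓ₁
  have hLℓ₁ : c + m * ℓ₁ = h ℓ₁ := by ring
  have hLℓ₂ : c + m * ℓ₂ = h ℓ₂ := by
    simp only [c, m, slope_def_field]; field_simp [sub_ne_zero.2 h₁₂'.ne']; ring
  have hLint : ∀ u v : ℝ, IntervalIntegrable (fun t => c + m * t) volume u v := fun u v =>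
    (continuous_const.add (continuous_const_mul m)).intervalIntegrable u v
  have hbelow : ∫ t in (0:ℝ)..ℓ₁, h t ≤ ∫ t in (0:ℝ)..ℓ₁, (c + m * t) :=
    integral_mono_on h₁ hi₁ (hLint 0 ℓ₁) fun t ht => by
      have := hconc.le_add_slope_mul_of_le ⟨ht.1, ht.2.trans h₁₂⟩ hmem₁ hmem₂ ht.2 h₁₂'
      linarith
  have habove : ∫ t in ℓ₁..ℓ₂, (c + m * t) ≤ ∫ t in ℓ₁..ℓ₂, h t :=
    integral_mono_on h₁₂ (hLint ℓ₁ ℓ₂) hi₁₂ fun t ht => by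
      have := hconc.add_slope_mul_le_of_mem_Icc hmem₁ hmem₂ ht
      linarith
  have haffine := sq_mul_integral_affine_le (c := c) (m := m) h₁₂ (by linarith)
  rw [hLℓ₁, hLℓ₂, ← integral_add_adjacent_intervals (hLint 0 ℓ₁) (hLint ℓ₁ ℓ₂)] at haffine
  rw [← integral_add_adjacent_intervals hi₁ hi₁₂]
  have hsq : h ℓ₁ ^ 2 ≤ h ℓ₂ ^ 2 := pow_le_pow_left₀ hnn hlt.le 2
  nlinarith [mul_le_mul_of_nonneg_left habove (sq_nonneg (h ℓ₁))]

theorem stmt4 (h : ℝ → ℝ)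
    (hnn : ∀ x, 0 ≤ x → 0 ≤ h x)
    (hconc : ConcaveOn ℝ (Set.Ici 0) h)
    (ℓ₁ ℓ₂ : ℝ) (h₁ : 0 < ℓ₁) (h₁₂ : ℓ₁ ≤ ℓ₂)
    (hA : 0 < ∫ t in (0:ℝ)..ℓ₁, h t) :
    h ℓ₂ / Real.sqrt (∫ t in (0:ℝ)..ℓ₂, h t) ≤ h ℓ₁ / Real.sqrt (∫ t in (0:ℝ)..ℓ₁, h t) := by
  -- A nonintegrable function would have integral `0`.
  have hi₁ : IntervalIntegrable h volume 0 ℓ₁ := intervalIntegrable_of_integral_ne_zero hA.ne'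
  have hi₁₂ : IntervalIntegrable h volume ℓ₁ ℓ₂ := by
    refine ContinuousOn.intervalIntegrable (hconc.continuousOn_interior.mono ?_)
    rw [interior_Ici, uIcc_of_le h₁₂]
    exact fun t ht => h₁.trans_le ht.1
  have hmono : ∫ t in (0:ℝ)..ℓ₁, h t ≤ ∫ t in (0:ℝ)..ℓ₂, h t := by
    rw [← integral_add_adjacent_intervals hi₁ hi₁₂, le_add_iff_nonneg_right]
    exact integral_nonneg h₁₂ fun t ht => hnn t (h₁.le.trans ht.1)
  have key : h ℓ₂ ^ 2 * ∫ t in (0:ℝ)..ℓ₁, h t ≤ h ℓ₁ ^ 2 * ∫ t in (0:ℝ)..ℓ₂, h t := by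
    rcases le_or_gt (h ℓ₂) (h ℓ₁) with hle | hlt
    · exact mul_le_mul (pow_le_pow_left₀ (hnn ℓ₂ (h₁.le.trans h₁₂)) hle 2) hmono hA.le
        (sq_nonneg _)
    · exact (hconc.subset Icc_subset_Ici_self (convex_Icc 0 ℓ₂)).sq_mul_integral_le_of_lt h₁.le
        (hnn ℓ₁ h₁.le) hlt h₁₂ hi₁ hi₁₂
  exact div_sqrt_le_div_sqrt_of_sq_mul_le (hnn ℓ₁ h₁.le) hA (hA.trans_le hmono) key
end

section
/- Let h : [0,∞) → [0,∞) be nonnegative and concave with A(ℓ) = ∫₀^ℓ h, and define f on (0,1] by f(exp(−A(ℓ))) = h(ℓ) (extended by f(x) = 0 for x ≤ exp(−A(∞)) when A is bounded). Then for 0 < y ≤ x ≤ 1 with x < 1 one has f(y)/√(−log y) ≤ f(x)/√(−log x). -/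
/-!
A nonnegative concave `h` on `[0, ∞)` is nondecreasing, and the substitution `x = exp (-A ℓ)`
turns the claim into the monotonicity of `h ℓ / √(A ℓ)`, i.e. `h b ^ 2 * A a ≤ h a ^ 2 * A b`
for `a ≤ b`. On `[0, a]` the graph of `h` lies below the secant through `(a, h a)` and
`(b, h b)`, which bounds `A a` times the slope of that secant by `h a ^ 2 / 2`; on `[a, b]` it
lies above the secant, so `A b - A a` is at least the trapezoid area `(b - a) (h a + h b) / 2`.
Points `x` with `-log x` beyond the range of `A` have `f x = 0`.
-/
open MeasureTheory Set

theorem ConcaveOn.sub_mul_add_sub_mul_le {𝕜 : Type*} [Field 𝕜] [LinearOrder 𝕜]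
    [IsStrictOrderedRing 𝕜] {s : Set 𝕜} {h : 𝕜 → 𝕜} (hconc : ConcaveOn 𝕜 s h)
    {p m q : 𝕜} (hp : p ∈ s) (hq : q ∈ s) (hpm : p ≤ m) (hmq : m ≤ q) :
    (q - m) * h p + (m - p) * h q ≤ (q - p) * h m := by
  rcases hpm.eq_or_lt with rfl | hpm
  · simp
  rcases hmq.eq_or_lt with rfl | hmq
  · simp
  have hslope := hconc.slope_anti_adjacent hp hq hpm hmq
  rw [div_le_div_iff₀ (sub_pos.2 hmq) (sub_pos.2 hpm)] at hslope
  linear_combination hslope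

theorem ConcaveOn.monotoneOn_Ici_of_bddBelow {h : ℝ → ℝ} {c : ℝ} (hconc : ConcaveOn ℝ (Ici c) h)
    (hbdd : BddBelow (h '' Ici c)) : MonotoneOn h (Ici c) := by
  obtain ⟨b, hb⟩ := hbdd
  intro s hs t ht hst
  by_contra! hlt
  have hst : s < t := hst.lt_of_ne (by rintro rfl; exact lt_irrefl _ hlt)
  -- far enough to the right, the secant through `s` and `t` drops below `b`
  set u := t + (t - s) * ((h t - b) / (h s - h t) + 1)
  have hbt : b ≤ h t := hb (mem_image_of_mem h ht)
  have htu : t ≤ u := by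
    have : 0 ≤ (h t - b) / (h s - h t) := div_nonneg (sub_nonneg.2 hbt) (sub_pos.2 hlt).le
    nlinarith
  have hu : (u - t) * (h s - h t) = (t - s) * (h s - b) := by
    simp only [u]; field_simp [(sub_pos.2 hlt).ne']; ring
  have hu_mem : u ∈ Ici c := mem_Ici.2 ((mem_Ici.1 ht).trans htu)
  have hbu : b ≤ h u := hb (mem_image_of_mem h hu_mem)
  have key := hconc.sub_mul_add_sub_mul_le hs hu_mem hst.le htu
  nlinarith [mul_le_mul_of_nonneg_left hbu (sub_pos.2 hst).le,
    mul_lt_mul_of_pos_left hlt (sub_pos.2 hst)]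

theorem integral_const_add_mul (c d u v : ℝ) :
    ∫ t in u..v, (c + d * t) = c * (v - u) + d * (v ^ 2 - u ^ 2) / 2 := by
  rw [intervalIntegral.integral_add intervalIntegrable_const
    ((continuous_const_mul d).intervalIntegrable _ _), intervalIntegral.integral_const_mul,
    integral_id, intervalIntegral.integral_const, smul_eq_mul]
  ring

theorem ConcaveOn.trapezoid_le_integral {h : ℝ → ℝ} {a b : ℝ} (hconc : ConcaveOn ℝ (Icc a b) h)
    (hab : a ≤ b) (hint : IntervalIntegrable h volume a b) :
    (b - a) * (h a + h b) / 2 ≤ ∫ t in a..b, h t := by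
  rcases hab.eq_or_lt with rfl | hab
  · simp
  have hchord : ∫ t in a..b, ((b - t) * h a + (t - a) * h b) ≤ ∫ t in a..b, (b - a) * h t :=
    intervalIntegral.integral_mono_on hab.le ((by fun_prop : Continuous _).intervalIntegrable _ _)
      (hint.const_mul _) fun t ht =>
      hconc.sub_mul_add_sub_mul_le (left_mem_Icc.2 hab.le) (right_mem_Icc.2 hab.le) ht.1 ht.2
  simp only [show ∀ t, (b - t) * h a + (t - a) * h b = (b * h a - a * h b) + (h b - h a) * t
    from fun t => by ring, integral_const_add_mul, intervalIntegral.integral_const_mul] at hchord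
  rw [div_le_iff₀ two_pos]
  nlinarith [sub_pos.2 hab]

theorem ConcaveOn.sub_mul_integral_le {h : ℝ → ℝ} {p a b : ℝ} (hconc : ConcaveOn ℝ (Icc p b) h)
    (hpa : p ≤ a) (hab : a ≤ b) (hint : IntervalIntegrable h volume p a) :
    (b - a) * ∫ t in p..a, h t ≤ ∫ t in p..a, ((b - t) * h a - (a - t) * h b) := by
  rw [← intervalIntegral.integral_const_mul]
  refine intervalIntegral.integral_mono_on hpa (hint.const_mul _)
    ((by fun_prop : Continuous _).intervalIntegrable _ _) fun t ht => ?_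
  have := hconc.sub_mul_add_sub_mul_le ⟨ht.1, ht.2.trans hab⟩ (right_mem_Icc.2 (hpa.trans hab))
    ht.2 hab
  linarith

theorem exists_intervalIntegral_eq_of_mem_Icc {h : ℝ → ℝ} {a ℓ L : ℝ} (haℓ : a ≤ ℓ)
    (hint : IntervalIntegrable h volume a ℓ) (hL : L ∈ Icc 0 (∫ t in a..ℓ, h t)) :
    ∃ c ∈ Icc a ℓ, ∫ t in a..c, h t = L := by
  have hcont : ContinuousOn (fun c => ∫ t in a..c, h t) (Icc a ℓ) := by
    simpa only [uIcc_of_le haℓ] using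
      intervalIntegral.continuousOn_primitive_interval' hint left_mem_uIcc
  rw [← intervalIntegral.integral_same (a := a) (f := h)] at hL
  exact intermediate_value_Icc haℓ hcont hL

section ConcaveNonneg

variable {h : ℝ → ℝ} (hnn : ∀ x, 0 ≤ x → 0 ≤ h x) (hconc : ConcaveOn ℝ (Ici 0) h)
include hnn hconc

theorem monotoneOn_Ici_zero_of_concaveOn_of_nonneg : MonotoneOn h (Ici 0) :=
  hconc.monotoneOn_Ici_of_bddBelow ⟨0, by rintro _ ⟨x, hx, rfl⟩; exact hnn x hx⟩

theorem intervalIntegrable_of_concaveOn_of_nonneg {u v : ℝ} (hu : 0 ≤ u) (hv : 0 ≤ v) :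
    IntervalIntegrable h volume u v :=
  ((monotoneOn_Ici_zero_of_concaveOn_of_nonneg hnn hconc).mono fun _ ht =>
    mem_Ici.2 ((le_min hu hv).trans ht.1)).intervalIntegrable

theorem sq_mul_integral_le_sq_mul_integral {a b : ℝ} (ha : 0 ≤ a) (hab : a ≤ b) :
    h b ^ 2 * ∫ t in (0:ℝ)..a, h t ≤ h a ^ 2 * ∫ t in (0:ℝ)..b, h t := by
  rcases hab.eq_or_lt with rfl | hab
  · rfl
  have hb : 0 ≤ b := ha.trans hab.le
  have hαβ : h a ≤ h b := monotoneOn_Ici_zero_of_concaveOn_of_nonneg hnn hconc ha hb hab.le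
  have hint : ∀ {u v : ℝ}, 0 ≤ u → 0 ≤ v → IntervalIntegrable h volume u v :=
    intervalIntegrable_of_concaveOn_of_nonneg hnn hconc
  have hsplit := intervalIntegral.integral_add_adjacent_intervals (hint le_rfl ha) (hint ha hb)
  have hleft := (hconc.subset Icc_subset_Ici_self (convex_Icc 0 b)).sub_mul_integral_le ha hab.le
    (hint le_rfl ha)
  have htrap := (hconc.subset ((Icc_subset_Ici_iff hab.le).2 ha)
    (convex_Icc a b)).trapezoid_le_integral hab.le (hint ha hb)
  simp only [show ∀ t, (b - t) * h a - (a - t) * h b = (b * h a - a * h b) + (h b - h a) * t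
    from fun t => by ring, integral_const_add_mul] at hleft
  set A := ∫ t in (0:ℝ)..a, h t
  set D := ∫ t in a..b, h t
  -- `A` is at most the area under the secant on `[0, a]`, and that area times the slope of the
  -- secant is at most `h a ^ 2 / 2` (AM-GM)
  have hslope : (h b - h a) * ((b - a) * A) ≤ ((b - a) * h a) ^ 2 / 2 := by
    nlinarith [mul_le_mul_of_nonneg_left hleft (sub_nonneg.2 hαβ),
      sq_nonneg ((b - a) * h a - (h b - h a) * a)]
  have key : (b - a) * ((h b ^ 2 - h a ^ 2) * A) ≤ (b - a) * (h a ^ 2 * D) := by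
    nlinarith [mul_le_mul_of_nonneg_left hslope (add_nonneg (hnn a ha) (hnn b hb)),
      mul_le_mul_of_nonneg_left htrap (mul_nonneg (sub_pos.2 hab).le (sq_nonneg (h a)))]
  rw [← hsplit]
  nlinarith [le_of_mul_le_mul_left key (sub_pos.2 hab)]

theorem div_sqrt_integral_le_div_sqrt_integral {a c : ℝ} (ha : 0 ≤ a) (hac : a ≤ c)
    (hA : 0 < ∫ t in (0:ℝ)..a, h t) :
    h c / √(∫ t in (0:ℝ)..c, h t) ≤ h a / √(∫ t in (0:ℝ)..a, h t) := by
  have hAac : ∫ t in (0:ℝ)..a, h t ≤ ∫ t in (0:ℝ)..c, h t :=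
    intervalIntegral.integral_mono_interval le_rfl ha hac
      (ae_restrict_of_forall_mem measurableSet_Ioc fun t ht => hnn t ht.1.le)
      (intervalIntegrable_of_concaveOn_of_nonneg hnn hconc le_rfl (ha.trans hac))
  rw [← Real.sqrt_sq (hnn c (ha.trans hac)), ← Real.sqrt_sq (hnn a ha),
    ← Real.sqrt_div (sq_nonneg _), ← Real.sqrt_div (sq_nonneg _)]
  exact Real.sqrt_le_sqrt ((div_le_div_iff₀ (hA.trans_le hAac) hA).2
    (sq_mul_integral_le_sq_mul_integral hnn hconc ha hac))

end ConcaveNonneg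

theorem stmt5 (h f : ℝ → ℝ)
    (hnn : ∀ x, 0 ≤ x → 0 ≤ h x)
    (hconc : ConcaveOn ℝ (Set.Ici 0) h)
    (hf : ∀ ℓ, 0 ≤ ℓ → f (Real.exp (-(∫ t in (0:ℝ)..ℓ, h t))) = h ℓ)
    (hf0 : ∀ x : ℝ, (∀ ℓ, 0 ≤ ℓ → x ≤ Real.exp (-(∫ t in (0:ℝ)..ℓ, h t))) → f x = 0)
    (x y : ℝ) (hy : 0 < y) (hyx : y ≤ x) (hx : x < 1) :
    f y / Real.sqrt (-Real.log y) ≤ f x / Real.sqrt (-Real.log x) := by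
  have hint : ∀ {ℓ : ℝ}, 0 ≤ ℓ → IntervalIntegrable h volume 0 ℓ :=
    intervalIntegrable_of_concaveOn_of_nonneg hnn hconc le_rfl
  have hx0 : 0 < x := hy.trans_le hyx
  have hLx : 0 < -Real.log x := neg_pos.2 (Real.log_neg hx0 hx)
  have hLxy : -Real.log x ≤ -Real.log y := neg_le_neg (Real.log_le_log hy hyx)
  have hval : ∀ c, 0 ≤ c → ∀ z, 0 < z → ∫ t in (0:ℝ)..c, h t = -Real.log z → f z = h c := by
    intro c hc z hz hcz
    simpa only [hcz, neg_neg, Real.exp_log hz] using hf c hc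
  have hzero : ∀ z, 0 < z → (∀ ℓ, 0 ≤ ℓ → ∫ t in (0:ℝ)..ℓ, h t < -Real.log z) → f z = 0 :=
    fun z hz hlt => hf0 z fun ℓ hℓ => (Real.log_le_iff_le_exp hz).1 (by linarith [hlt ℓ hℓ])
  by_cases hreach_y : ∃ ℓ, 0 ≤ ℓ ∧ -Real.log y ≤ ∫ t in (0:ℝ)..ℓ, h t
  · obtain ⟨ℓ, hℓ, hyℓ⟩ := hreach_y
    obtain ⟨c, hc, hcy⟩ :=
      exists_intervalIntegral_eq_of_mem_Icc hℓ (hint hℓ) ⟨hLx.le.trans hLxy, hyℓ⟩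
    obtain ⟨a, ha, hax⟩ :=
      exists_intervalIntegral_eq_of_mem_Icc hc.1 (hint hc.1) ⟨hLx.le, hcy ▸ hLxy⟩
    rw [hval c hc.1 y hy hcy, hval a ha.1 x hx0 hax, ← hcy, ← hax]
    exact div_sqrt_integral_le_div_sqrt_integral hnn hconc ha.1 ha.2 (hax ▸ hLx)
  push Not at hreach_y
  rw [hzero y hy hreach_y, zero_div]
  refine div_nonneg ?_ (Real.sqrt_nonneg _)
  by_cases hreach_x : ∃ ℓ, 0 ≤ ℓ ∧ -Real.log x ≤ ∫ t in (0:ℝ)..ℓ, h t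
  · obtain ⟨ℓ, hℓ, hxℓ⟩ := hreach_x
    obtain ⟨a, ha, hax⟩ := exists_intervalIntegral_eq_of_mem_Icc hℓ (hint hℓ) ⟨hLx.le, hxℓ⟩
    exact (hval a ha.1 x hx0 hax).symm ▸ hnn a ha.1
  push Not at hreach_x
  exact (hzero x hx0 hreach_x).ge
end

section
/- Let p ∈ [0,1] and n a natural number. Then Σ_{k=0}^∞ | (np)^k/k! · e^{−np} − C(n,k)·p^k·(1−p)^{n−k} | ≤ 2p, where C(n,k) = 0 for k > n. (Total variation bound between Binomial(n,p) and Poisson(np).) -/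
/-!
Stein–Chen method. Let `λ = (n + 1) p`, `π = Po(λ)` with distribution function `F`, and
`W ~ Bin(n + 1, p)`. For each `j` the function `f_j` with `f_j 0 = 0` and
`f_j (k + 1) = ∑_{i ≤ k} π_i (1_{i = j} - π_j) / (λ π_k)` solves
`λ f_j (k + 1) - k f_j k = 1_{k = j} - π_j`. Writing `W = V + B` with `V ~ Bin(n, p)` and an
independent Bernoulli `B`, averaging the left side over `W` gives
`P(W = j) - π_j = λ p E[f_j (V + 2) - f_j (V + 1)]`.
As `f_j (k + 1)` is `π_j (1 - F_k) / (λ π_k)` for `j ≤ k` and `-π_j F_k / (λ π_k)` otherwise, and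
`F_k / π_k` increases while `(1 - F_k) / π_k` decreases, the increment `f_j (k + 2) - f_j (k + 1)`
is nonpositive unless `j = k + 1`, when it is at most `1 / λ`. So `P(W ∈ A) - π(A) ≤ p` for every
`A ⊆ ℕ`, and `A = {k | π_k < P(W = k)}` gives the bound.
-/

open Finset Real
open scoped Nat

lemma tsum_abs_sub_le_two_mul {α : Type*} {a b : α → ℝ} {s : Finset α} {σ c : ℝ}
    (ha0 : ∀ x, 0 ≤ a x) (ha : HasSum a σ) (hbs : ∀ x ∉ s, b x = 0) (hb : ∑ x ∈ s, b x = σ)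
    (hc : ∀ t ⊆ s, ∑ x ∈ t, (b x - a x) ≤ c) :
    ∑' x, |a x - b x| ≤ 2 * c := by
  have habs (x : α) : |a x - b x| = (a x - b x) + 2 * max (b x - a x) 0 := by
    rcases le_total (a x) (b x) with h | h
    · rw [abs_of_nonpos (by linarith), max_eq_left (by linarith)]; ring
    · rw [abs_of_nonneg (by linarith), max_eq_right (by linarith)]; ring
  have hpos : ∀ x ∉ s, max (b x - a x) 0 = 0 := fun x hx => by
    rw [hbs x hx, zero_sub, max_eq_right (neg_nonpos.mpr (ha0 x))]
  have hsum := (ha.sub (hb ▸ hasSum_sum_of_ne_finset_zero hbs)).add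
    ((hasSum_sum_of_ne_finset_zero hpos).mul_left 2)
  rw [sub_self, zero_add, ← funext habs] at hsum
  have hfilter : ∑ x ∈ s, max (b x - a x) 0 = ∑ x ∈ s with a x < b x, (b x - a x) := by
    rw [sum_filter]
    refine sum_congr rfl fun x _ => ?_
    split_ifs with h
    · exact max_eq_left (by linarith)
    · exact max_eq_right (by linarith)
  rw [hsum.tsum_eq, hfilter]
  linarith [hc _ (filter_subset (fun x => a x < b x) s)]

noncomputable def poissonWeight (lam : ℝ) (k : ℕ) : ℝ := lam ^ k / k ! * exp (-lam)

noncomputable def poissonCDF (lam : ℝ) (k : ℕ) : ℝ := ∑ i ∈ range (k + 1), poissonWeight lam i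

section Poisson

variable {lam : ℝ}

lemma poissonWeight_nonneg (hlam : 0 ≤ lam) (k : ℕ) : 0 ≤ poissonWeight lam k := by
  unfold poissonWeight; positivity

lemma poissonWeight_pos (hlam : 0 < lam) (k : ℕ) : 0 < poissonWeight lam k := by
  unfold poissonWeight; positivity

lemma poissonWeight_ne_zero (hlam : lam ≠ 0) (k : ℕ) : poissonWeight lam k ≠ 0 := by
  unfold poissonWeight; positivity

lemma succ_mul_poissonWeight_succ (lam : ℝ) (k : ℕ) :
    (k + 1) * poissonWeight lam (k + 1) = lam * poissonWeight lam k := by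
  unfold poissonWeight
  rw [Nat.factorial_succ]
  push_cast
  field_simp
  ring

lemma hasSum_poissonWeight (lam : ℝ) : HasSum (poissonWeight lam) 1 := by
  have h := (NormedSpace.expSeries_div_hasSum_exp lam).mul_right (exp (-lam))
  rwa [← exp_eq_exp_ℝ, ← exp_add, add_neg_cancel, exp_zero] at h

lemma mul_poissonCDF_le (hlam : 0 ≤ lam) (k : ℕ) :
    lam * poissonCDF lam k ≤ (k + 1) * poissonCDF lam (k + 1) := by
  have hshift : lam * poissonCDF lam k = ∑ i ∈ range (k + 2), i * poissonWeight lam i := by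
    rw [poissonCDF, mul_sum, sum_range_succ' _ (k + 1)]
    simp [succ_mul_poissonWeight_succ]
  rw [hshift, poissonCDF, mul_sum]
  refine sum_le_sum fun i hi => mul_le_mul_of_nonneg_right ?_ (poissonWeight_nonneg hlam i)
  exact_mod_cast Nat.lt_succ_iff.mp (mem_range.mp hi)

lemma one_sub_poissonCDF_eq_tsum (lam : ℝ) (k : ℕ) :
    1 - poissonCDF lam k = ∑' i, poissonWeight lam (i + (k + 1)) := by
  have h := (hasSum_poissonWeight lam).summable.sum_add_tsum_nat_add (k + 1)
  rw [(hasSum_poissonWeight lam).tsum_eq] at h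
  rw [poissonCDF]
  linarith

lemma succ_mul_one_sub_poissonCDF_succ_le (hlam : 0 ≤ lam) (k : ℕ) :
    (k + 1) * (1 - poissonCDF lam (k + 1)) ≤ lam * (1 - poissonCDF lam k) := by
  have hsum (m : ℕ) : Summable fun i => poissonWeight lam (i + m) :=
    (summable_nat_add_iff m).2 (hasSum_poissonWeight lam).summable
  rw [one_sub_poissonCDF_eq_tsum, one_sub_poissonCDF_eq_tsum, ← tsum_mul_left, ← tsum_mul_left]
  refine Summable.tsum_le_tsum (fun i => ?_) ((hsum _).mul_left _) ((hsum _).mul_left _)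
  rw [← succ_mul_poissonWeight_succ, show i + (k + 1) + 1 = i + (k + 1 + 1) by ring]
  gcongr
  · exact poissonWeight_nonneg hlam _
  · linarith [(i.cast_nonneg : (0 : ℝ) ≤ i)]

lemma poissonCDF_div_le (hlam : 0 < lam) (k : ℕ) :
    poissonCDF lam k / poissonWeight lam k
      ≤ poissonCDF lam (k + 1) / poissonWeight lam (k + 1) := by
  have hπ := poissonWeight_pos hlam k
  have hπ' := poissonWeight_pos hlam (k + 1)
  rw [div_le_div_iff₀ hπ hπ']
  refine le_of_mul_le_mul_left ?_ hlam
  calc lam * (poissonCDF lam k * poissonWeight lam (k + 1))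
      = lam * poissonCDF lam k * poissonWeight lam (k + 1) := by ring
    _ ≤ (k + 1) * poissonCDF lam (k + 1) * poissonWeight lam (k + 1) :=
      mul_le_mul_of_nonneg_right (mul_poissonCDF_le hlam.le k) hπ'.le
    _ = lam * (poissonCDF lam (k + 1) * poissonWeight lam k) := by
      linear_combination poissonCDF lam (k + 1) * succ_mul_poissonWeight_succ lam k

lemma one_sub_poissonCDF_div_le (hlam : 0 < lam) (k : ℕ) :
    (1 - poissonCDF lam (k + 1)) / poissonWeight lam (k + 1)
      ≤ (1 - poissonCDF lam k) / poissonWeight lam k := by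
  have hπ := poissonWeight_pos hlam k
  have hπ' := poissonWeight_pos hlam (k + 1)
  rw [div_le_div_iff₀ hπ' hπ]
  refine le_of_mul_le_mul_left ?_ hlam
  calc lam * ((1 - poissonCDF lam (k + 1)) * poissonWeight lam k)
      = (1 - poissonCDF lam (k + 1)) * (lam * poissonWeight lam k) := by ring
    _ = (k + 1) * (1 - poissonCDF lam (k + 1)) * poissonWeight lam (k + 1) := by
      linear_combination -(1 - poissonCDF lam (k + 1)) * succ_mul_poissonWeight_succ lam k
    _ ≤ lam * (1 - poissonCDF lam k) * poissonWeight lam (k + 1) :=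
      mul_le_mul_of_nonneg_right (succ_mul_one_sub_poissonCDF_succ_le hlam.le k) hπ'.le
    _ = lam * ((1 - poissonCDF lam k) * poissonWeight lam (k + 1)) := by ring

noncomputable def steinSolution (lam : ℝ) (h : ℕ → ℝ) : ℕ → ℝ
  | 0 => 0
  | k + 1 => (∑ i ∈ range (k + 1), poissonWeight lam i * h i) / (lam * poissonWeight lam k)

lemma steinSolution_equation (hlam : lam ≠ 0) (h : ℕ → ℝ) (k : ℕ) :
    lam * steinSolution lam h (k + 1) - k * steinSolution lam h k = h k := by
  cases k with
  | zero =>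
    have := poissonWeight_ne_zero hlam 0
    simp only [steinSolution, zero_add, range_one, sum_singleton]
    field_simp
    simp
  | succ k =>
    have := poissonWeight_ne_zero hlam (k + 1)
    simp only [steinSolution]
    rw [sum_range_succ, ← succ_mul_poissonWeight_succ lam k]
    push_cast
    field_simp
    ring

noncomputable def centeredIndicator (lam : ℝ) (j i : ℕ) : ℝ :=
  (if i = j then 1 else 0) - poissonWeight lam j

lemma steinSolution_centeredIndicator (hlam : lam ≠ 0) (j k : ℕ) :
    steinSolution lam (centeredIndicator lam j) (k + 1) = poissonWeight lam j / lam *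
      if j ≤ k then (1 - poissonCDF lam k) / poissonWeight lam k
      else -(poissonCDF lam k / poissonWeight lam k) := by
  have hπ := poissonWeight_ne_zero hlam k
  have hsum : ∑ i ∈ range (k + 1), poissonWeight lam i * centeredIndicator lam j i
      = (if j ≤ k then poissonWeight lam j else 0) - poissonWeight lam j * poissonCDF lam k := by
    simp only [centeredIndicator, mul_sub, mul_ite, mul_one, mul_zero, sum_sub_distrib,
      sum_ite_eq', mem_range, Nat.lt_succ_iff, poissonCDF, ← sum_mul]
    ring
  rw [steinSolution, hsum]
  split_ifs
  · field_simp
  · field_simp; ring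

lemma steinSolution_centeredIndicator_succ_le (hlam : 0 < lam) {j k : ℕ} (hjk : j ≠ k + 1) :
    steinSolution lam (centeredIndicator lam j) (k + 2)
      ≤ steinSolution lam (centeredIndicator lam j) (k + 1) := by
  have hcoef : 0 ≤ poissonWeight lam j / lam := (div_pos (poissonWeight_pos hlam j) hlam).le
  rw [steinSolution_centeredIndicator hlam.ne', steinSolution_centeredIndicator hlam.ne']
  refine mul_le_mul_of_nonneg_left ?_ hcoef
  rcases le_or_gt j k with hj | hj
  · rw [if_pos (by omega), if_pos hj]
    exact one_sub_poissonCDF_div_le hlam k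
  · rw [if_neg (by omega), if_neg (by omega)]
    exact neg_le_neg (poissonCDF_div_le hlam k)

lemma steinSolution_centeredIndicator_self_sub_le (hlam : 0 < lam) (k : ℕ) :
    steinSolution lam (centeredIndicator lam (k + 1)) (k + 2)
      - steinSolution lam (centeredIndicator lam (k + 1)) (k + 1) ≤ 1 / lam := by
  have hπ := poissonWeight_ne_zero hlam.ne' (k + 1)
  have hcoef : 0 ≤ poissonWeight lam (k + 1) / lam :=
    (div_pos (poissonWeight_pos hlam _) hlam).le
  rw [steinSolution_centeredIndicator hlam.ne', steinSolution_centeredIndicator hlam.ne',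
    if_pos le_rfl, if_neg (by omega)]
  calc poissonWeight lam (k + 1) / lam * ((1 - poissonCDF lam (k + 1)) / poissonWeight lam (k + 1))
        - poissonWeight lam (k + 1) / lam * -(poissonCDF lam k / poissonWeight lam k)
      = (1 - poissonCDF lam (k + 1)) / lam
        + poissonWeight lam (k + 1) / lam * (poissonCDF lam k / poissonWeight lam k) := by
        field_simp; ring
    _ ≤ (1 - poissonCDF lam (k + 1)) / lam
        + poissonWeight lam (k + 1) / lam * (poissonCDF lam (k + 1) / poissonWeight lam (k + 1)) :=
        add_le_add_right (mul_le_mul_of_nonneg_left (poissonCDF_div_le hlam k) hcoef) _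
    _ = 1 / lam := by field_simp; ring

lemma sum_steinSolution_centeredIndicator_sub_le (hlam : 0 < lam) (s : Finset ℕ) (k : ℕ) :
    ∑ j ∈ s, (steinSolution lam (centeredIndicator lam j) (k + 2)
      - steinSolution lam (centeredIndicator lam j) (k + 1)) ≤ 1 / lam := by
  calc _ ≤ ∑ j ∈ s, if j = k + 1 then 1 / lam else 0 := by
        refine sum_le_sum fun j _ => ?_
        split_ifs with hj
        · subst hj; exact steinSolution_centeredIndicator_self_sub_le hlam k
        · exact sub_nonpos.mpr (steinSolution_centeredIndicator_succ_le hlam hj)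
    _ ≤ 1 / lam := by
        rw [sum_ite_eq']
        split_ifs
        · exact le_rfl
        · positivity

end Poisson

noncomputable def binomialWeight (n : ℕ) (p : ℝ) (k : ℕ) : ℝ :=
  n.choose k * p ^ k * (1 - p) ^ (n - k)

lemma binomialWeight_nonneg {p : ℝ} (hp0 : 0 ≤ p) (hp1 : p ≤ 1) (n k : ℕ) :
    0 ≤ binomialWeight n p k := by
  have : 0 ≤ 1 - p := sub_nonneg.mpr hp1
  unfold binomialWeight; positivity

lemma binomialWeight_eq_zero_of_lt {n k : ℕ} (h : n < k) (p : ℝ) :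
    binomialWeight n p k = 0 := by
  simp [binomialWeight, Nat.choose_eq_zero_of_lt h]

lemma sum_binomialWeight (n : ℕ) (p : ℝ) : ∑ k ∈ range (n + 1), binomialWeight n p k = 1 := by
  have h := (add_pow p (1 - p) n).symm
  rw [add_sub_cancel, one_pow] at h
  rw [← h]
  exact sum_congr rfl fun k _ => by rw [binomialWeight]; ring

lemma binomialWeight_succ_zero (n : ℕ) (p : ℝ) :
    binomialWeight (n + 1) p 0 = (1 - p) * binomialWeight n p 0 := by
  simp [binomialWeight, pow_succ]; ring

lemma binomialWeight_succ_succ (n : ℕ) (p : ℝ) (k : ℕ) :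
    binomialWeight (n + 1) p (k + 1)
      = (1 - p) * binomialWeight n p (k + 1) + p * binomialWeight n p k := by
  rcases lt_or_ge n k with h | h
  · simp [binomialWeight_eq_zero_of_lt, h, Nat.lt_succ_of_lt h]
  · obtain ⟨m, rfl⟩ := Nat.exists_eq_add_of_le h
    rw [binomialWeight, binomialWeight, binomialWeight, Nat.choose_succ_succ,
      show k + m + 1 - (k + 1) = m by omega, show k + m - (k + 1) = m - 1 by omega,
      show k + m - k = m by omega]
    rcases m with _ | m
    · simp; ring
    · simp only [Nat.add_sub_cancel]; push_cast; ring

lemma succ_mul_binomialWeight_succ (n : ℕ) (p : ℝ) (k : ℕ) :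
    (k + 1) * binomialWeight (n + 1) p (k + 1) = (n + 1) * p * binomialWeight n p k := by
  have h : ((n + 1).choose (k + 1) * (k + 1) : ℝ) = (n + 1) * n.choose k := by
    exact_mod_cast (Nat.add_one_mul_choose_eq n k).symm
  rw [binomialWeight, binomialWeight, Nat.add_sub_add_right]
  linear_combination p ^ (k + 1) * (1 - p) ^ (n - k) * h

lemma sum_binomialWeight_succ_mul (n : ℕ) (p : ℝ) (G : ℕ → ℝ) :
    ∑ k ∈ range (n + 2), binomialWeight (n + 1) p k * G k
      = ∑ k ∈ range (n + 1), binomialWeight n p k * ((1 - p) * G k + p * G (k + 1)) := by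
  have htop : ∑ k ∈ range (n + 1), binomialWeight n p (k + 1) * G (k + 1)
      = ∑ k ∈ range n, binomialWeight n p (k + 1) * G (k + 1) := by
    rw [sum_range_succ, binomialWeight_eq_zero_of_lt n.lt_succ_self, zero_mul, add_zero]
  calc ∑ k ∈ range (n + 2), binomialWeight (n + 1) p k * G k
      = ∑ k ∈ range (n + 1), ((1 - p) * (binomialWeight n p (k + 1) * G (k + 1))
          + p * (binomialWeight n p k * G (k + 1))) + (1 - p) * (binomialWeight n p 0 * G 0) := by
        rw [sum_range_succ', binomialWeight_succ_zero, mul_assoc]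
        simp only [binomialWeight_succ_succ, add_mul, mul_assoc]
    _ = (1 - p) * (∑ k ∈ range (n + 1), binomialWeight n p (k + 1) * G (k + 1)
          + binomialWeight n p 0 * G 0)
          + p * ∑ k ∈ range (n + 1), binomialWeight n p k * G (k + 1) := by
        rw [sum_add_distrib, ← mul_sum, ← mul_sum]; ring
    _ = (1 - p) * ∑ k ∈ range (n + 1), binomialWeight n p k * G k
          + p * ∑ k ∈ range (n + 1), binomialWeight n p k * G (k + 1) := by
        rw [sum_range_succ' (fun k => binomialWeight n p k * G k), htop]
    _ = _ := by
        rw [mul_sum, mul_sum, ← sum_add_distrib]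
        exact sum_congr rfl fun k _ => by ring

lemma sum_binomialWeight_succ_mul_cast_mul (n : ℕ) (p : ℝ) (g : ℕ → ℝ) :
    ∑ k ∈ range (n + 2), binomialWeight (n + 1) p k * (k * g k)
      = (n + 1) * p * ∑ k ∈ range (n + 1), binomialWeight n p k * g (k + 1) := by
  rw [sum_range_succ', mul_sum]
  simp only [Nat.cast_zero, zero_mul, mul_zero, add_zero, Nat.cast_succ]
  refine sum_congr rfl fun k _ => ?_
  rw [← mul_assoc, mul_comm (binomialWeight _ _ _), succ_mul_binomialWeight_succ]
  ring

lemma sum_binomialWeight_mul_stein (n : ℕ) (p : ℝ) (g : ℕ → ℝ) :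
    ∑ k ∈ range (n + 2), binomialWeight (n + 1) p k * ((n + 1) * p * g (k + 1) - k * g k)
      = (n + 1) * p * p * ∑ k ∈ range (n + 1), binomialWeight n p k * (g (k + 2) - g (k + 1)) := by
  simp_rw [mul_sub (binomialWeight (n + 1) p _), sum_sub_distrib,
    sum_binomialWeight_succ_mul_cast_mul,
    sum_binomialWeight_succ_mul n p fun k => (n + 1) * p * g (k + 1)]
  rw [mul_sum, mul_sum, ← sum_sub_distrib]
  exact sum_congr rfl fun k _ => by ring

lemma binomialWeight_sub_poissonWeight_eq {p : ℝ} (hp : 0 < p) (n j : ℕ) :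
    binomialWeight (n + 1) p j - poissonWeight ((n + 1) * p) j
      = (n + 1) * p * p * ∑ k ∈ range (n + 1), binomialWeight n p k *
        (steinSolution ((n + 1) * p) (centeredIndicator ((n + 1) * p) j) (k + 2)
          - steinSolution ((n + 1) * p) (centeredIndicator ((n + 1) * p) j) (k + 1)) := by
  have hlam : 0 < (n + 1) * p := by positivity
  rw [← sum_binomialWeight_mul_stein]
  simp only [steinSolution_equation hlam.ne', centeredIndicator, mul_sub, mul_ite, mul_one, mul_zero,
    sum_sub_distrib, sum_ite_eq', ← sum_mul, sum_binomialWeight, one_mul]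
  split_ifs with hj
  · rfl
  · rw [binomialWeight_eq_zero_of_lt (by simp at hj; omega)]

lemma sum_binomialWeight_sub_poissonWeight_le {p : ℝ} (hp0 : 0 < p) (hp1 : p ≤ 1) (n : ℕ)
    (s : Finset ℕ) : ∑ j ∈ s, (binomialWeight (n + 1) p j - poissonWeight ((n + 1) * p) j) ≤ p := by
  have hlam : 0 < (n + 1) * p := by positivity
  simp_rw [binomialWeight_sub_poissonWeight_eq hp0, ← mul_sum]
  rw [sum_comm]
  simp_rw [← mul_sum]
  calc (n + 1) * p * p * ∑ k ∈ range (n + 1), binomialWeight n p k * ∑ j ∈ s,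
        (steinSolution ((n + 1) * p) (centeredIndicator ((n + 1) * p) j) (k + 2)
          - steinSolution ((n + 1) * p) (centeredIndicator ((n + 1) * p) j) (k + 1))
      ≤ (n + 1) * p * p * ∑ k ∈ range (n + 1), binomialWeight n p k * (1 / ((n + 1) * p)) := by
        gcongr with k
        · exact binomialWeight_nonneg hp0.le hp1 n k
        · exact sum_steinSolution_centeredIndicator_sub_le hlam s k
    _ = p := by
        rw [← sum_mul, sum_binomialWeight]
        field_simp

theorem stmt7 (p : ℝ) (hp0 : 0 ≤ p) (hp1 : p ≤ 1) (n : ℕ) :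
    ∑' k : ℕ, |((n : ℝ) * p) ^ k / (Nat.factorial k) * Real.exp (-((n : ℝ) * p))
      - (n.choose k : ℝ) * p ^ k * (1 - p) ^ (n - k)| ≤ 2 * p := by
  change ∑' k, |poissonWeight (n * p) k - binomialWeight n p k| ≤ 2 * p
  rcases hp0.eq_or_lt with rfl | hp
  · have h (k : ℕ) : poissonWeight 0 k = binomialWeight n 0 k := by
      cases k <;> simp [poissonWeight, binomialWeight]
    simp [h]
  rcases n with _ | n
  · have h (k : ℕ) : poissonWeight 0 k = binomialWeight 0 p k := by
      cases k <;> simp [poissonWeight, binomialWeight]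
    simpa [h] using hp0
  push_cast
  exact tsum_abs_sub_le_two_mul (poissonWeight_nonneg (by positivity)) (hasSum_poissonWeight _)
    (fun k hk => binomialWeight_eq_zero_of_lt (by simpa using hk) p) (sum_binomialWeight _ p)
    (fun t _ => sum_binomialWeight_sub_poissonWeight_le hp hp1 n t)
end
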